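/- For every real p ≥ 4 one has ∫_H |z₂|^{−p} dV(z) = ∞. Consequently, for every k ∈ ℕ and every p ≥ 4, the holomorphic function u(z₁,z₂) = 1/z₂ on H does not belong to the weighted Sobolev space W^{k,p}(H, δ^{kp}): its k-th derivative ∂^k u/∂z₂^k = ±k!/z₂^{k+1} satisfies ∫_H |∂^k u/∂z₂^k(z)|^p |z₂|^{kp} dV(z) = k!^p ∫_H |z₂|^{−p} dV(z) = ∞. -/

import Mathlib

/-!
`H` contains the disjoint dyadic pieces `{|z₁| < r/2, r/2 < |z₂| < r}`, `r = 2⁻ⁿ`. Each has volume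
`3π²r⁴/16`, and on it `|z₂|^{-p} ≥ r^{-p} ≥ r^{-4}`, so each contributes at least `3π²/16` to
`∫_H |z₂|^{-p}`. Since `1/z₂` is a holomorphic function of `z₂` alone, `∂/∂z₂` acts on it as the
complex derivative, whence `∂^k(1/z₂)/∂z₂^k = (-1)^k k!/z₂^{k+1}` and the weighted integrand is
`k!^p |z₂|^{-p}`.
-/

open MeasureTheory Complex ComplexConjugate

noncomputable section

/-- The Hartogs triangle `H = {(z₁,z₂) : |z₁| < |z₂| < 1}`. -/
def Hartogs : Set (ℂ × ℂ) := {z | ‖z.1‖ < ‖z.2‖ ∧ ‖z.2‖ < 1}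

/-- Wirtinger derivative `∂/∂z₁`. -/
def dz1 (f : ℂ × ℂ → ℂ) : ℂ × ℂ → ℂ := fun z =>
  (1/2) * (fderiv ℝ f z (1, 0) - Complex.I * fderiv ℝ f z (Complex.I, 0))

/-- Wirtinger derivative `∂/∂z₂`. -/
def dz2 (f : ℂ × ℂ → ℂ) : ℂ × ℂ → ℂ := fun z =>
  (1/2) * (fderiv ℝ f z (0, 1) - Complex.I * fderiv ℝ f z (0, Complex.I))

/-- Wirtinger derivative `∂/∂z̄₁`. -/
def dzb1 (f : ℂ × ℂ → ℂ) : ℂ × ℂ → ℂ := fun z =>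
  (1/2) * (fderiv ℝ f z (1, 0) + Complex.I * fderiv ℝ f z (Complex.I, 0))

/-- Wirtinger derivative `∂/∂z̄₂`. -/
def dzb2 (f : ℂ × ℂ → ℂ) : ℂ × ℂ → ℂ := fun z =>
  (1/2) * (fderiv ℝ f z (0, 1) + Complex.I * fderiv ℝ f z (0, Complex.I))

/-- `D^α = ∂^{|α|}/∂z₁^{α₁}∂z₂^{α₂}∂z̄₁^{α₃}∂z̄₂^{α₄}`. -/
def Dop (α : ℕ × ℕ × ℕ × ℕ) (f : ℂ × ℂ → ℂ) : ℂ × ℂ → ℂ :=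
  dz1^[α.1] (dz2^[α.2.1] (dzb1^[α.2.2.1] (dzb2^[α.2.2.2] f)))

/-- Multi-indices `α = (α₁,α₂,α₃,α₄)` with `|α| ≤ k`. -/
def multiIdx (k : ℕ) : Finset (ℕ × ℕ × ℕ × ℕ) :=
  (Finset.range (k+1) ×ˢ Finset.range (k+1) ×ˢ Finset.range (k+1) ×ˢ Finset.range (k+1)).filter
    (fun α => α.1 + α.2.1 + α.2.2.1 + α.2.2.2 ≤ k)

open scoped ENNReal Topology
open Metric Real

theorem dz2_eq_deriv_of_eventuallyEq {f : ℂ × ℂ → ℂ} {g : ℂ → ℂ} {z : ℂ × ℂ}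
    (hf : f =ᶠ[𝓝 z] fun ζ => g ζ.2) (hg : DifferentiableAt ℂ g z.2) :
    dz2 f z = deriv g z.2 := by
  have hd : HasFDerivAt (fun ζ : ℂ × ℂ => g ζ.2) _ z :=
    (hg.hasDerivAt.hasFDerivAt.comp z (hasFDerivAt_snd (𝕜 := ℂ))).restrictScalars ℝ
  simp only [dz2, hf.fderiv_eq, hd.fderiv, ContinuousLinearMap.coe_restrictScalars',
    ContinuousLinearMap.comp_apply, ContinuousLinearMap.coe_snd',
    ContinuousLinearMap.toSpanSingleton_apply, smul_eq_mul, one_mul]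
  linear_combination (-deriv g z.2 / 2) * Complex.I_mul_I

theorem differentiableOn_iterate_deriv {g : ℂ → ℂ} {U : Set ℂ} (hU : IsOpen U)
    (hg : DifferentiableOn ℂ g U) (k : ℕ) : DifferentiableOn ℂ (deriv^[k] g) U := by
  induction k with
  | zero => exact hg
  | succ k ih => simpa only [Function.iterate_succ_apply'] using ih.deriv hU

theorem iterate_dz2_comp_snd {g : ℂ → ℂ} {U : Set ℂ} (hU : IsOpen U)
    (hg : DifferentiableOn ℂ g U) (k : ℕ) {z : ℂ × ℂ} (hz : z.2 ∈ U) :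
    dz2^[k] (fun ζ => g ζ.2) z = deriv^[k] g z.2 := by
  induction k generalizing z with
  | zero => rfl
  | succ k ih =>
    rw [Function.iterate_succ_apply', Function.iterate_succ_apply']
    refine dz2_eq_deriv_of_eventuallyEq ?_
      ((differentiableOn_iterate_deriv hU hg k).differentiableAt (hU.mem_nhds hz))
    filter_upwards [(hU.preimage continuous_snd).mem_nhds hz] with ζ hζ using ih hζ

theorem iterate_dz2_inv_snd (k : ℕ) {z : ℂ × ℂ} (hz : z.2 ≠ 0) :
    dz2^[k] (fun ζ : ℂ × ℂ => (ζ.2)⁻¹) z = (-1) ^ k * (k.factorial : ℂ) / z.2 ^ (k + 1) := by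
  rw [iterate_dz2_comp_snd isOpen_compl_singleton differentiableOn_inv k hz, iter_deriv_inv,
    show (-1 - k : ℤ) = -((k + 1 : ℕ) : ℤ) by push_cast; ring, zpow_neg, zpow_natCast,
    div_eq_mul_inv]

theorem measurableSet_Hartogs : MeasurableSet Hartogs :=
  ((isOpen_lt continuous_fst.norm continuous_snd.norm).inter
    (isOpen_lt continuous_snd.norm continuous_const)).measurableSet

theorem snd_ne_zero_of_mem_Hartogs {z : ℂ × ℂ} (hz : z ∈ Hartogs) : z.2 ≠ 0 :=
  norm_pos_iff.1 ((norm_nonneg _).trans_lt hz.1)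

def hartogsPiece (r : ℝ) : Set (ℂ × ℂ) :=
  ball 0 (r / 2) ×ˢ (ball 0 r \ closedBall 0 (r / 2))

theorem mem_hartogsPiece {r : ℝ} {z : ℂ × ℂ} :
    z ∈ hartogsPiece r ↔ ‖z.1‖ < r / 2 ∧ r / 2 < ‖z.2‖ ∧ ‖z.2‖ < r := by
  simp [hartogsPiece, and_comm]

theorem measurableSet_hartogsPiece (r : ℝ) : MeasurableSet (hartogsPiece r) :=
  measurableSet_ball.prod (measurableSet_ball.diff measurableSet_closedBall)

theorem hartogsPiece_subset_Hartogs {r : ℝ} (hr : r ≤ 1) : hartogsPiece r ⊆ Hartogs := by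
  intro z hz
  obtain ⟨h1, h2, h3⟩ := mem_hartogsPiece.1 hz
  exact ⟨h1.trans h2, h3.trans_le hr⟩

theorem volume_hartogsPiece {r : ℝ} (hr : 0 < r) :
    volume (hartogsPiece r) = ENNReal.ofReal (3 * π ^ 2 / 16 * r ^ 4) := by
  have hπ : (NNReal.pi : ℝ≥0∞) = ENNReal.ofReal π := by
    rw [← ENNReal.ofReal_coe_nnreal, NNReal.coe_real_pi]
  have hsub : closedBall (0 : ℂ) (r / 2) ⊆ ball 0 r := closedBall_subset_ball (by linarith)
  rw [hartogsPiece, Measure.volume_eq_prod, Measure.prod_prod,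
    measure_sdiff hsub measurableSet_closedBall.nullMeasurableSet measure_closedBall_lt_top.ne,
    Complex.volume_ball, Complex.volume_ball, Complex.volume_closedBall, hπ,
    ← ENNReal.ofReal_pow (by positivity), ← ENNReal.ofReal_pow hr.le,
    ← ENNReal.ofReal_mul (by positivity), ← ENNReal.ofReal_mul (by positivity),
    ← ENNReal.ofReal_sub _ (by positivity), ← ENNReal.ofReal_mul (by positivity)]
  congr 1
  ring

theorem le_setLIntegral_hartogsPiece {p r : ℝ} (hp : 4 ≤ p) (hr₀ : 0 < r) (hr₁ : r ≤ 1) :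
    ENNReal.ofReal (3 * π ^ 2 / 16) ≤ ∫⁻ z in hartogsPiece r, ENNReal.ofReal (‖z.2‖ ^ (-p)) := by
  have hbound : ∀ z ∈ hartogsPiece r,
      ENNReal.ofReal (r ^ (-p)) ≤ ENNReal.ofReal (‖z.2‖ ^ (-p)) := by
    intro z hz
    obtain ⟨-, h2, h3⟩ := mem_hartogsPiece.1 hz
    exact ENNReal.ofReal_le_ofReal
      (rpow_le_rpow_of_nonpos (by linarith) h3.le (by linarith))
  have hr4 : 1 ≤ r ^ 4 * r ^ (-p) := by
    rw [← rpow_natCast, ← rpow_add hr₀]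
    exact one_le_rpow_of_pos_of_le_one_of_nonpos hr₀ hr₁ (by push_cast; linarith)
  calc ENNReal.ofReal (3 * π ^ 2 / 16)
      ≤ ENNReal.ofReal (3 * π ^ 2 / 16 * r ^ 4 * r ^ (-p)) := by
        gcongr
        nlinarith [pi_pos]
    _ = volume (hartogsPiece r) * ENNReal.ofReal (r ^ (-p)) := by
        rw [volume_hartogsPiece hr₀, ← ENNReal.ofReal_mul (by positivity)]
    _ = ∫⁻ _ in hartogsPiece r, ENNReal.ofReal (r ^ (-p)) := by
        rw [setLIntegral_const, mul_comm]
    _ ≤ ∫⁻ z in hartogsPiece r, ENNReal.ofReal (‖z.2‖ ^ (-p)) :=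
        setLIntegral_mono' (measurableSet_hartogsPiece r) hbound

theorem pairwise_disjoint_hartogsPiece :
    Pairwise (Function.onFun Disjoint fun n : ℕ => hartogsPiece ((1 / 2) ^ n)) := by
  refine (pairwise_disjoint_on _).2 fun m n hmn => Set.disjoint_left.2 fun z hm hn => ?_
  have h1 := (mem_hartogsPiece.1 hm).2.1
  have h2 := (mem_hartogsPiece.1 hn).2.2
  have : (1 / 2 : ℝ) ^ n ≤ (1 / 2) ^ (m + 1) :=
    pow_le_pow_of_le_one (by norm_num) (by norm_num) hmn
  rw [pow_succ] at this
  linarith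

theorem setLIntegral_Hartogs_norm_snd_rpow_neg_eq_top {p : ℝ} (hp : 4 ≤ p) :
    ∫⁻ z in Hartogs, ENNReal.ofReal (‖z.2‖ ^ (-p)) = ⊤ := by
  refine top_le_iff.1 ?_
  calc (⊤ : ℝ≥0∞) = ∑' _ : ℕ, ENNReal.ofReal (3 * π ^ 2 / 16) :=
        (ENNReal.tsum_const_eq_top_of_ne_zero (by positivity)).symm
    _ ≤ ∑' n : ℕ, ∫⁻ z in hartogsPiece ((1 / 2) ^ n), ENNReal.ofReal (‖z.2‖ ^ (-p)) :=
        ENNReal.tsum_le_tsum fun n =>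
          le_setLIntegral_hartogsPiece hp (by positivity) (pow_le_one₀ (by norm_num) (by norm_num))
    _ = ∫⁻ z in ⋃ n : ℕ, hartogsPiece ((1 / 2) ^ n), ENNReal.ofReal (‖z.2‖ ^ (-p)) :=
        (lintegral_iUnion (fun _ => measurableSet_hartogsPiece _)
          pairwise_disjoint_hartogsPiece _).symm
    _ ≤ _ := lintegral_mono_set (Set.iUnion_subset fun n =>
        hartogsPiece_subset_Hartogs (pow_le_one₀ (by norm_num) (by norm_num)))

theorem norm_iterate_dz2_inv_snd_rpow_mul (k : ℕ) (p : ℝ) {z : ℂ × ℂ} (hz : z.2 ≠ 0) :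
    ‖dz2^[k] (fun ζ : ℂ × ℂ => (ζ.2)⁻¹) z‖ ^ p * ‖z.2‖ ^ ((k : ℝ) * p) =
      (k.factorial : ℝ) ^ p * ‖z.2‖ ^ (-p) := by
  have hr : 0 < ‖z.2‖ := norm_pos_iff.2 hz
  rw [iterate_dz2_inv_snd k hz, norm_div, norm_mul, norm_pow, norm_neg, norm_one, one_pow,
    one_mul, Complex.norm_natCast, norm_pow, div_rpow (Nat.cast_nonneg _) (by positivity),
    ← rpow_natCast, ← rpow_mul hr.le, div_mul_eq_mul_div, mul_div_assoc, ← rpow_sub hr]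
  push_cast
  ring_nf

theorem setLIntegral_norm_iterate_dz2_inv_snd_rpow_mul {s : Set (ℂ × ℂ)} (hs : MeasurableSet s)
    (h0 : ∀ z ∈ s, z.2 ≠ 0) (k : ℕ) (p : ℝ) :
    ∫⁻ z in s, ENNReal.ofReal (‖dz2^[k] (fun ζ : ℂ × ℂ => (ζ.2)⁻¹) z‖ ^ p *
        ‖z.2‖ ^ ((k : ℝ) * p)) =
      ENNReal.ofReal ((k.factorial : ℝ) ^ p) * ∫⁻ z in s, ENNReal.ofReal (‖z.2‖ ^ (-p)) := by
  rw [← lintegral_const_mul' _ _ ENNReal.ofReal_ne_top]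
  refine setLIntegral_congr_fun hs fun z hz => ?_
  rw [norm_iterate_dz2_inv_snd_rpow_mul k p (h0 z hz), ENNReal.ofReal_mul (by positivity)]

/-- for `p ≥ 4`, `∫_H |z₂|^{-p} dV = ∞`; consequently, for every `k`,
`u(z) = 1/z₂` is not in `W^{k,p}(H, δ^{kp})`: its `k`-th derivative `∂^k u/∂z₂^k = ±k!/z₂^{k+1}`
satisfies `∫_H |∂^k u/∂z₂^k|^p |z₂|^{kp} dV = k!^p ∫_H |z₂|^{-p} dV = ∞`. -/
theorem inv_z2_not_in_weighted_sobolev :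
    ∀ p : ℝ, 4 ≤ p →
      (∫⁻ z in Hartogs, ENNReal.ofReal (‖z.2‖ ^ (-p)) = ⊤) ∧
      ∀ k : ℕ,
        (∀ z ∈ Hartogs, dz2^[k] (fun ζ : ℂ × ℂ => (ζ.2)⁻¹) z =
          (-1) ^ k * (k.factorial : ℂ) / z.2 ^ (k + 1)) ∧
        (∫⁻ z in Hartogs,
          ENNReal.ofReal (‖dz2^[k] (fun ζ : ℂ × ℂ => (ζ.2)⁻¹) z‖ ^ p *
            ‖z.2‖ ^ ((k : ℝ) * p)) = ⊤) ∧
        ¬ ((∫⁻ z in Hartogs, ∑ α ∈ multiIdx k,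
            ENNReal.ofReal (‖Dop α (fun ζ : ℂ × ℂ => (ζ.2)⁻¹) z‖ ^ p *
              ‖z.2‖ ^ ((k : ℝ) * p))) < ⊤) := by
  intro p hp
  have hH := setLIntegral_Hartogs_norm_snd_rpow_neg_eq_top hp
  refine ⟨hH, fun k => ⟨fun z hz => iterate_dz2_inv_snd k (snd_ne_zero_of_mem_Hartogs hz), ?_⟩⟩
  have hk : ∫⁻ z in Hartogs, ENNReal.ofReal (‖dz2^[k] (fun ζ : ℂ × ℂ => (ζ.2)⁻¹) z‖ ^ p *
      ‖z.2‖ ^ ((k : ℝ) * p)) = ⊤ := by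
    rw [setLIntegral_norm_iterate_dz2_inv_snd_rpow_mul measurableSet_Hartogs
      (fun _ => snd_ne_zero_of_mem_Hartogs) k p, hH,
      ENNReal.mul_top (ENNReal.ofReal_pos.2 (by positivity)).ne']
  refine ⟨hk, ?_⟩
  rw [not_lt_top_iff, ← top_le_iff, ← hk]
  refine lintegral_mono fun z => ?_
  have hα : ((0, k, 0, 0) : ℕ × ℕ × ℕ × ℕ) ∈ multiIdx k := by simp [multiIdx]
  exact (Finset.single_le_sum (f := fun α => ENNReal.ofReal
    (‖Dop α (fun ζ : ℂ × ℂ => (ζ.2)⁻¹) z‖ ^ p * ‖z.2‖ ^ ((k : ℝ) * p))) (fun _ _ => zero_le) hα :)
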